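/- Let ρ0 and ρ1 be n×n complex density matrices, set F1 = √(√ρ1 · ρ0 · √ρ1) and F = Tr(F1), and assume F > 0. If ρ1 = (1/F)·F1, then Tr(P1 ρ0) = F², where P1 is the orthogonal projection onto the range of ρ1. -/

import Mathlib

open Matrix
open scoped ComplexOrder

/-- The positive semidefinite square root of a matrix (zero if the matrix is not
positive semidefinite). -/
noncomputable def msqrt {n : ℕ} (A : Matrix (Fin n) (Fin n) ℂ) : Matrix (Fin n) (Fin n) ℂ :=
  open scoped Classical in
  if h : A.PosSemidef then
    (h.1.eigenvectorUnitary : Matrix (Fin n) (Fin n) ℂ) *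
      diagonal ((↑) ∘ (fun i => Real.sqrt (h.1.eigenvalues i))) *
      (star h.1.eigenvectorUnitary : Matrix (Fin n) (Fin n) ℂ)
  else 0

/-- `P` is the orthogonal projection onto the range (support) of `A`. -/
def IsRangeProj {n : ℕ} (A P : Matrix (Fin n) (Fin n) ℂ) : Prop :=
  P.IsHermitian ∧ P * P = P ∧
    LinearMap.range P.mulVecLin = LinearMap.range A.mulVecLin

/-! Write `S = √ρ1`. The hypothesis says `√(S ρ0 S) = F S²`, so `S ρ0 S = F² S⁴`. Let `T` be the
inverse of `S` on its support (Hermitian, commuting with `S`, `S T S = S`). Then `Q = S T` is the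
orthogonal projection onto the range of `S`, which is the range of `ρ1`, so `P1 = Q`; and
`Q ρ0 Q = T (S ρ0 S) T = F² S² = F² ρ1`, whence `Tr (P1 ρ0) = Tr (Q ρ0 Q) = F²`. -/

section GeneralizedInverse

variable {R : Type*} {S T : R}

lemma isIdempotentElem_mul_of_mul_mul_eq_self [Semigroup R] (hSTS : S * T * S = S) :
    IsIdempotentElem (S * T) := by
  rw [IsIdempotentElem, ← mul_assoc, hSTS]

lemma isStarProjection_mul_of_commute [Semigroup R] [StarMul R] (hS : IsSelfAdjoint S)
    (hT : IsSelfAdjoint T) (hST : Commute S T) (hSTS : S * T * S = S) :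
    IsStarProjection (S * T) :=
  ⟨isIdempotentElem_mul_of_mul_mul_eq_self hSTS, (hS.commute_iff hT).mp hST⟩

lemma Commute.mul_mul_mul_eq_mul_mul_mul [Semigroup R] (hST : Commute S T) (a : R) :
    S * T * a * (S * T) = T * (S * a * S) * T := by
  nth_rw 1 [hST.eq]
  simp only [mul_assoc]

lemma Commute.sq_mul_eq_self [Monoid R] (hST : Commute S T) (hSTS : S * T * S = S) :
    S ^ 2 * T = S := by
  rw [sq, mul_assoc, hST.eq, ← mul_assoc, hSTS]

lemma Commute.mul_sq_eq_self [Monoid R] (hST : Commute S T) (hSTS : S * T * S = S) :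
    T * S ^ 2 = S := by
  rw [sq, ← mul_assoc, ← hST.eq, hSTS]

lemma Commute.mul_pow_four_mul_eq_sq [Monoid R] (hST : Commute S T) (hSTS : S * T * S = S) :
    T * S ^ 4 * T = S ^ 2 := by
  rw [show 4 = 2 + 2 from rfl, pow_add, ← mul_assoc, hST.mul_sq_eq_self hSTS, mul_assoc,
    hST.sq_mul_eq_self hSTS, sq]

end GeneralizedInverse

lemma IsStarProjection.eq_of_mul_eq_of_mul_eq {R : Type*} [Mul R] [StarMul R] {P Q : R}
    (hP : IsStarProjection P) (hQ : IsStarProjection Q) (hPQ : P * Q = Q) (hQP : Q * P = P) :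
    P = Q := by
  rw [← hQP, ← hQ.isSelfAdjoint.star_eq, ← hP.isSelfAdjoint.star_eq, ← star_mul, hPQ,
    hQ.isSelfAdjoint.star_eq]

namespace Matrix

variable {ι R : Type*} [Fintype ι] [CommRing R]

lemma range_mulVecLin_mul_le (A B : Matrix ι ι R) :
    LinearMap.range (A * B).mulVecLin ≤ LinearMap.range A.mulVecLin := by
  rw [mulVecLin_mul]
  exact LinearMap.range_comp_le_range _ _

lemma range_mulVecLin_eq_of_mul_eq {A B C D : Matrix ι ι R} (hA : A = B * C) (hB : B = A * D) :
    LinearMap.range A.mulVecLin = LinearMap.range B.mulVecLin := by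
  apply le_antisymm
  · rw [hA]; exact range_mulVecLin_mul_le B C
  · rw [hB]; exact range_mulVecLin_mul_le A D

lemma mul_eq_right_of_range_le [DecidableEq ι] {P B : Matrix ι ι R} (hP : IsIdempotentElem P)
    (h : LinearMap.range B.mulVecLin ≤ LinearMap.range P.mulVecLin) : P * B = B := by
  have hPlin : IsIdempotentElem P.mulVecLin := by
    rw [IsIdempotentElem, Module.End.mul_eq_comp, ← mulVecLin_mul, hP.eq]
  refine toLin'.injective (LinearMap.ext fun x => ?_)
  rw [toLin'_mul, LinearMap.comp_apply, toLin'_apply', toLin'_apply']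
  exact (LinearMap.IsIdempotentElem.mem_range_iff hPlin).mp (h (LinearMap.mem_range_self _ x))

lemma IsStarProjection.eq_of_range_mulVecLin_eq [DecidableEq ι] [StarRing R] {P Q : Matrix ι ι R}
    (hP : IsStarProjection P) (hQ : IsStarProjection Q)
    (h : LinearMap.range P.mulVecLin = LinearMap.range Q.mulVecLin) : P = Q :=
  hP.eq_of_mul_eq_of_mul_eq hQ (mul_eq_right_of_range_le hP.isIdempotentElem h.ge)
    (mul_eq_right_of_range_le hQ.isIdempotentElem h.le)

end Matrix

lemma Matrix.IsHermitian.exists_commute_mul_mul_eq_self {ι 𝕜 : Type*} [Fintype ι] [DecidableEq ι]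
    [RCLike 𝕜] {A : Matrix ι ι 𝕜} (hA : A.IsHermitian) :
    ∃ T : Matrix ι ι 𝕜, T.IsHermitian ∧ Commute A T ∧ A * T * A = A := by
  set φ := Unitary.conjStarAlgAut 𝕜 _ hA.eigenvectorUnitary
  set d : ι → 𝕜 := RCLike.ofReal ∘ hA.eigenvalues
  have hA' : A = φ (diagonal d) := hA.spectral_theorem
  refine ⟨φ (diagonal d⁻¹), ?_, ?_, ?_⟩
  · refine IsSelfAdjoint.map (isHermitian_diagonal_of_self_adjoint _ ?_).isSelfAdjoint φ
    ext i
    simp [d]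
  · rw [hA']
    refine Commute.map ?_ φ
    simp only [Commute, SemiconjBy, diagonal_mul_diagonal, mul_comm]
  · rw [hA', ← map_mul, ← map_mul, diagonal_mul_diagonal, diagonal_mul_diagonal]
    simp only [Pi.inv_apply, mul_inv_mul_cancel]

lemma msqrt_eq {n : ℕ} {A : Matrix (Fin n) (Fin n) ℂ} (hA : A.PosSemidef) :
    msqrt A = Unitary.conjStarAlgAut ℂ _ hA.1.eigenvectorUnitary
      (diagonal fun i => (Real.sqrt (hA.1.eigenvalues i) : ℂ)) := by
  rw [msqrt, dif_pos hA]
  rfl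

lemma posSemidef_msqrt {n : ℕ} {A : Matrix (Fin n) (Fin n) ℂ} (hA : A.PosSemidef) :
    (msqrt A).PosSemidef := by
  rw [msqrt_eq hA, Unitary.conjStarAlgAut_apply]
  refine PosSemidef.mul_mul_conjTranspose_same ?_ _
  simp [Real.sqrt_nonneg]

lemma msqrt_mul_self {n : ℕ} {A : Matrix (Fin n) (Fin n) ℂ} (hA : A.PosSemidef) :
    msqrt A * msqrt A = A := by
  conv_rhs => rw [hA.1.spectral_theorem]
  rw [msqrt_eq hA, ← map_mul, diagonal_mul_diagonal]
  congr 2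
  ext i
  simp [← Complex.ofReal_mul, Real.mul_self_sqrt (hA.eigenvalues_nonneg i)]

theorem trace_proj_eq_fidelity_sq_general {n : ℕ}
    (ρ0 ρ1 P1 : Matrix (Fin n) (Fin n) ℂ)
    (hρ0 : ρ0.PosSemidef)
    (hρ1 : ρ1.PosSemidef) (hρ1tr : ρ1.trace = 1)
    (hP1 : IsRangeProj ρ1 P1)
    (hF : 0 < (msqrt (msqrt ρ1 * ρ0 * msqrt ρ1)).trace.re)
    (hprop : ρ1 = (((msqrt (msqrt ρ1 * ρ0 * msqrt ρ1)).trace.re : ℝ) : ℂ)⁻¹ •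
      msqrt (msqrt ρ1 * ρ0 * msqrt ρ1)) :
    (P1 * ρ0).trace.re = ((msqrt (msqrt ρ1 * ρ0 * msqrt ρ1)).trace.re) ^ 2 := by
  set S := msqrt ρ1
  set F := (msqrt (S * ρ0 * S)).trace.re
  have hS : S.PosSemidef := posSemidef_msqrt hρ1
  have hSS : S ^ 2 = ρ1 := by rw [sq, msqrt_mul_self hρ1]
  have hSρ0S : S * ρ0 * S = (F : ℂ) ^ 2 • S ^ 4 := by
    have hSρ0S_psd : (S * ρ0 * S).PosSemidef := by
      simpa [hS.isHermitian.eq] using hρ0.mul_mul_conjTranspose_same S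
    have hF1 : msqrt (S * ρ0 * S) = (F : ℂ) • S ^ 2 := by
      rw [hSS, hprop, smul_smul, mul_inv_cancel₀ (by exact_mod_cast hF.ne'), one_smul]
    rw [← msqrt_mul_self hSρ0S_psd, hF1, smul_mul_smul_comm, ← pow_add, sq]
  obtain ⟨T, hT, hST, hSTS⟩ := hS.isHermitian.exists_commute_mul_mul_eq_self
  have hQ : IsStarProjection (S * T) :=
    isStarProjection_mul_of_commute hS.isHermitian.isSelfAdjoint hT.isSelfAdjoint hST hSTS
  obtain ⟨hP1herm, hP1idem, hP1range⟩ := hP1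
  have hP1Q : P1 = S * T := by
    refine IsStarProjection.eq_of_range_mulVecLin_eq ⟨hP1idem, hP1herm.isSelfAdjoint⟩ hQ ?_
    calc LinearMap.range P1.mulVecLin = LinearMap.range ρ1.mulVecLin := hP1range
      _ = LinearMap.range S.mulVecLin :=
        range_mulVecLin_eq_of_mul_eq (hSS ▸ sq S) (hSS ▸ (hST.sq_mul_eq_self hSTS).symm)
      _ = LinearMap.range (S * T).mulVecLin := range_mulVecLin_eq_of_mul_eq hSTS.symm rfl
  calc (P1 * ρ0).trace.re = (S * T * ρ0 * (S * T)).trace.re := by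
        rw [hP1Q, trace_mul_cycle (S * T) ρ0 (S * T), hQ.isIdempotentElem.eq]
    _ = (T * (S * ρ0 * S) * T).trace.re := by rw [hST.mul_mul_mul_eq_mul_mul_mul]
    _ = F ^ 2 := by
        rw [hSρ0S, mul_smul_comm, smul_mul_assoc, hST.mul_pow_four_mul_eq_sq hSTS, hSS,
          trace_smul, hρ1tr, smul_eq_mul, mul_one, ← Complex.ofReal_pow, Complex.ofReal_re]

/-- If `ρ1 = (1/F)·F1` with `F = Tr(F1) > 0`, then `Tr(P1 ρ0) = F²`. -/
theorem trace_proj_eq_fidelity_sq {n : ℕ}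
    (ρ0 ρ1 P1 : Matrix (Fin n) (Fin n) ℂ)
    (hρ0 : ρ0.PosSemidef) (hρ0tr : ρ0.trace = 1)
    (hρ1 : ρ1.PosSemidef) (hρ1tr : ρ1.trace = 1)
    (hP1 : IsRangeProj ρ1 P1)
    (hF : 0 < (msqrt (msqrt ρ1 * ρ0 * msqrt ρ1)).trace.re)
    (hprop : ρ1 = (((msqrt (msqrt ρ1 * ρ0 * msqrt ρ1)).trace.re : ℝ) : ℂ)⁻¹ •
      msqrt (msqrt ρ1 * ρ0 * msqrt ρ1)) :
    (P1 * ρ0).trace.re = ((msqrt (msqrt ρ1 * ρ0 * msqrt ρ1)).trace.re) ^ 2 :=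
  trace_proj_eq_fidelity_sq_general ρ0 ρ1 P1 hρ0 hρ1 hρ1tr hP1 hF hprop
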